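/- For every codeword x ∈ C and every feasible solution (x^f,τ^f) ∈ P(H), the relative solution (x^r,τ^r) of (x^f,τ^f) to x is again a feasible solution: (x^r,τ^r) ∈ P(H). -/

import Mathlib

/-!
Adding a codeword `x` permutes each local code `C_j` (since `x ∈ C_j`), and on the embedded
vertices this is the affine involution of `ℝⁿ` flipping the coordinates where `x i = 1`. Affine maps
commute with convex hulls, so this map preserves `Q(H)`. Relabelling `τ_i` by `π(x)_i` permutes its
four entries, and its marginals are exactly the flipped marginals of `τ_i`, so the relative solution
is feasible with `x^r` the flip of `x^f`.
-/

open scoped BigOperators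

/-- Symbol pairs: elements of Σ² with Σ = {0,1} represented as `ZMod 2`. -/
abbrev Pair := ZMod 2 × ZMod 2

/-- Cyclic successor index: `i + 1 (mod n)`. -/
def nxt {n : ℕ} (i : Fin n) : Fin n := ⟨(i.val + 1) % n, Nat.mod_lt _ i.pos⟩

/-- Embedding of a binary vector into `ℝ^n`. -/
def emb {n : ℕ} (x : Fin n → ZMod 2) : Fin n → ℝ := fun i => ((x i).val : ℝ)

/-- The binary linear code with parity-check matrix `H`. -/
def code {m n : ℕ} (H : Fin m → Fin n → ZMod 2) : Set (Fin n → ZMod 2) :=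
  {x | ∀ j, ∑ i, H j i * x i = 0}

/-- The local (single parity check) code of row `j` of `H`. -/
def localCode {m n : ℕ} (H : Fin m → Fin n → ZMod 2) (j : Fin m) : Set (Fin n → ZMod 2) :=
  {x | ∑ i, H j i * x i = 0}

/-- The fundamental polytope `Q(H)`: intersection of convex hulls of local codes. -/
def fundPolytope {m n : ℕ} (H : Fin m → Fin n → ZMod 2) : Set (Fin n → ℝ) :=
  ⋂ j, convexHull ℝ (emb '' localCode H j)

/-- The LP feasible region `P(H)` of pairs `(x, τ)`. -/
def feasible {m n : ℕ} (H : Fin m → Fin n → ZMod 2) :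
    Set ((Fin n → ℝ) × (Fin n → Pair → ℝ)) :=
  {xt | (∀ i ab, xt.2 i ab ∈ Set.Icc (0 : ℝ) 1) ∧
        (∀ i, ∑ ab : Pair, xt.2 i ab = 1) ∧
        (∀ i, xt.1 i = xt.2 i (1, 0) + xt.2 i (1, 1)) ∧
        (∀ i, xt.1 (nxt i) = xt.2 i (0, 1) + xt.2 i (1, 1)) ∧
        xt.1 ∈ fundPolytope H}

/-- `T(x)`: the indicator vector of the symbol-pair read vector `π(x)`. -/
def indic {n : ℕ} (x : Fin n → ZMod 2) : Fin n → Pair → ℝ :=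
  fun i ab => if (x i, x (nxt i)) = ab then 1 else 0

/-- Channel transition probability `p(y | a)` of the symbol-pair read channel. -/
noncomputable def chan (p : ℝ) (y a : Pair) : ℝ := if y = a then 1 - p else p / 3

/-- Likelihood `p(ŷ | x)` of the received pair vector `ŷ` given codeword `x`. -/
noncomputable def lik {n : ℕ} (p : ℝ) (y : Fin n → Pair) (x : Fin n → ZMod 2) : ℝ :=
  ∏ i, chan p (y i) (x i, x (nxt i))

/-- The cost vector `λ = Λ(ŷ)`, `λ_{i,(a,b)} = -ln p(ŷ_i | (a,b))`. -/
noncomputable def Lam {n : ℕ} (p : ℝ) (y : Fin n → Pair) : Fin n → Pair → ℝ :=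
  fun i ab => -Real.log (chan p (y i) ab)

/-- The pairing `⟨λ, τ⟩ = Σ_i Σ_{(a,b)} λ_{i,(a,b)} τ_{i,(a,b)}`. -/
def innerP {n : ℕ} (l t : Fin n → Pair → ℝ) : ℝ := ∑ i, ∑ ab : Pair, l i ab * t i ab

/-- The fractional pair weight `W_fp`. -/
def Wfp {n : ℕ} (x : Fin n → ℝ) : ℝ := ∑ i, max (x i) (x (nxt i))

/-- The set `B(x)` of received vectors causing LP decoding failure when `x` was sent. -/
def Bset {m n : ℕ} (H : Fin m → Fin n → ZMod 2) (p : ℝ) (x : Fin n → ZMod 2) :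
    Set (Fin n → Pair) :=
  {y | ∃ xt ∈ feasible H, xt.1 ≠ emb x ∧ innerP (Lam p y) xt.2 ≤ innerP (Lam p y) (indic x)}

lemma ZMod.univ_two : (Finset.univ : Finset (ZMod 2)) = {0, 1} := rfl

lemma ZMod.two_cases (a : ZMod 2) : a = 0 ∨ a = 1 := by
  revert a; decide

lemma sum_pair (q : Pair → ℝ) : ∑ ab : Pair, q ab = q (0, 0) + q (0, 1) + q (1, 0) + q (1, 1) := by
  simp only [Fintype.sum_prod_type, ZMod.univ_two, Finset.sum_pair zero_ne_one]
  ring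

lemma ZMod.val_add_of_two (a b : ZMod 2) :
    ((a + b).val : ℝ) = a.val + (1 - 2 * a.val) * b.val := by
  rcases a.two_cases with rfl | rfl <;> rcases b.two_cases with rfl | rfl <;>
    simp only [add_zero, zero_add, show (1 + 1 : ZMod 2) = 0 from rfl, ZMod.val_zero,
      ZMod.val_one] <;> norm_num

lemma fst_marginal_add {q : Pair → ℝ} (hq : ∑ ab, q ab = 1) (a b : ZMod 2) :
    q ((1, 0) + (a, b)) + q ((1, 1) + (a, b)) = a.val + (1 - 2 * a.val) * (q (1, 0) + q (1, 1)) := by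
  rw [sum_pair] at hq
  rcases a.two_cases with rfl | rfl <;> rcases b.two_cases with rfl | rfl <;>
    simp only [Prod.mk_add_mk, add_zero, zero_add, show (1 + 1 : ZMod 2) = 0 from rfl,
      ZMod.val_zero, ZMod.val_one, Nat.cast_zero, Nat.cast_one] <;> linarith

lemma snd_marginal_add {q : Pair → ℝ} (hq : ∑ ab, q ab = 1) (a b : ZMod 2) :
    q ((0, 1) + (a, b)) + q ((1, 1) + (a, b)) = b.val + (1 - 2 * b.val) * (q (0, 1) + q (1, 1)) :=
  fst_marginal_add (q := q ∘ Prod.swap) ((Equiv.prodComm _ _).sum_comp q ▸ hq) b a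

section

variable {m n : ℕ}

-- Coordinate `i` is flipped, `t ↦ 1 - t`, exactly where `x i = 1`.
noncomputable def flipAff (x : Fin n → ZMod 2) : (Fin n → ℝ) →ᵃ[ℝ] (Fin n → ℝ) :=
  (LinearMap.mulLeft ℝ (1 - 2 * emb x)).toAffineMap + AffineMap.const ℝ _ (emb x)

lemma flipAff_apply (x : Fin n → ZMod 2) (y : Fin n → ℝ) (i : Fin n) :
    flipAff x y i = (x i).val + (1 - 2 * (x i).val) * y i := by
  simp [flipAff, emb, add_comm]

lemma flipAff_emb (x c : Fin n → ZMod 2) : flipAff x (emb c) = emb (x + c) := by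
  ext i
  rw [flipAff_apply, emb, emb, Pi.add_apply, ZMod.val_add_of_two]

lemma add_mem_localCode {H : Fin m → Fin n → ZMod 2} {j : Fin m} {x c : Fin n → ZMod 2}
    (hx : x ∈ localCode H j) (hc : c ∈ localCode H j) : x + c ∈ localCode H j := by
  simp only [localCode, Set.mem_ofPred_eq, Pi.add_apply, mul_add, Finset.sum_add_distrib] at *
  rw [hx, hc, add_zero]

lemma code_subset_localCode (H : Fin m → Fin n → ZMod 2) (j : Fin m) : code H ⊆ localCode H j :=
  fun _ hx => hx j

lemma flipAff_mem_fundPolytope {H : Fin m → Fin n → ZMod 2} {x : Fin n → ZMod 2}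
    (hx : x ∈ code H) {y : Fin n → ℝ} (hy : y ∈ fundPolytope H) :
    flipAff x y ∈ fundPolytope H := by
  simp only [fundPolytope, Set.mem_iInter] at hy ⊢
  intro j
  have hverts : flipAff x '' (emb '' localCode H j) ⊆ emb '' localCode H j := by
    rintro _ ⟨_, ⟨c, hc, rfl⟩, rfl⟩
    exact ⟨x + c, add_mem_localCode (code_subset_localCode H j hx) hc, (flipAff_emb x c).symm⟩
  have hmem := Set.mem_image_of_mem (flipAff x) (hy j)
  rw [AffineMap.image_convexHull] at hmem
  exact convexHull_min (hverts.trans (subset_convexHull ℝ _)) (convex_convexHull ℝ _) hmem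

end

theorem stmt6_general {n m : ℕ} (H : Fin m → Fin n → ZMod 2)
    (x : Fin n → ZMod 2) (hx : x ∈ code H)
    (xf : Fin n → ℝ) (tf : Fin n → Pair → ℝ)
    (hfeas : (xf, tf) ∈ feasible H) :
    ((fun i => tf i ((1, 0) + (x i, x (nxt i))) + tf i ((1, 1) + (x i, x (nxt i)))),
     (fun i ab => tf i (ab + (x i, x (nxt i))))) ∈ feasible H := by
  obtain ⟨hbox, hsum, hfst, hsnd, hQ⟩ := hfeas
  have hxr : (fun i => tf i ((1, 0) + (x i, x (nxt i))) + tf i ((1, 1) + (x i, x (nxt i)))) =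
      flipAff x xf := by
    ext i
    rw [fst_marginal_add (hsum i), flipAff_apply, ← hfst i]
  refine ⟨fun i _ => hbox i _, fun i => (Equiv.sum_comp (Equiv.addRight _) (tf i)).trans (hsum i),
    fun _ => rfl, fun i => ?_, hxr ▸ flipAff_mem_fundPolytope hx hQ⟩
  -- both sides are `xf (nxt i)` flipped by `x (nxt i)`
  dsimp only
  rw [fst_marginal_add (hsum _), snd_marginal_add (hsum i), ← hfst, hsnd]

/-- the relative solution of a feasible solution to a codeword is feasible. -/
theorem stmt6 {n m : ℕ} (hn : 2 ≤ n) (H : Fin m → Fin n → ZMod 2)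
    (x : Fin n → ZMod 2) (hx : x ∈ code H)
    (xf : Fin n → ℝ) (tf : Fin n → Pair → ℝ)
    (hfeas : (xf, tf) ∈ feasible H) :
    ((fun i => tf i ((1, 0) + (x i, x (nxt i))) + tf i ((1, 1) + (x i, x (nxt i)))),
     (fun i ab => tf i (ab + (x i, x (nxt i))))) ∈ feasible H :=
  stmt6_general H x hx xf tf hfeas
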